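/- arXiv:1508.04706 — 2 statements merged into one kernel-verified Lean document; each statement's English description precedes it below -/
import Mathlib

section
/- If b^{1/2} = ν₁ or b^{1/2} = ν₂ (with b > 0 constant), then the constant structure B ≡ b has no quasi-eigenvalues: Σ(b) = ∅. -/
/-! With `B ≡ r²` and `s = iωr`, the Riemann invariants `y' ± s y` of a mode solve `w' = ±s w`,
so each is an exponential and vanishes identically once it vanishes at one point; if both do,
then `y ≡ 0`. Matching `ν₁ = r` makes the left boundary condition say exactly that `y' + s y`
vanishes at `a₁`. Carried to `a₂`, this turns the right boundary condition into
`iω(1 + μ₂ r) y(a₂) = 0`, so `y(a₂) = y'(a₂) = 0` and `y' - s y` vanishes at `a₂` too.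
Matching `r μ₂ = 1` at the right end is symmetric. -/

open MeasureTheory Set

/-- `IsMode a₁ a₂ B ν₁ μ₂ ω y g` : `y` is a nontrivial `W^{2,1}` solution (with derivative `g`)
of `y'' = -ω² B y` on `(a₁,a₂)` satisfying the radiation boundary conditions
`y'(a₁) = -i ω ν₁ y(a₁)` and `μ₂ y'(a₂) = i ω y(a₂)`, where `μ₂ = 1/ν₂` (so `μ₂ = 0`
encodes `ν₂ = ∞`, i.e. the Dirichlet condition `y(a₂) = 0` when `ω ≠ 0`). -/
def IsMode (a₁ a₂ : ℝ) (B : ℝ → ℝ) (ν₁ μ₂ : ℝ) (ω : ℂ) (y g : ℝ → ℂ) : Prop :=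
  ContinuousOn y (Set.Icc a₁ a₂) ∧ ContinuousOn g (Set.Icc a₁ a₂) ∧
  MeasureTheory.IntegrableOn (fun t => (B t : ℂ) * y t) (Set.Icc a₁ a₂) ∧
  (∀ x ∈ Set.Icc a₁ a₂, y x = y a₁ + ∫ t in a₁..x, g t) ∧
  (∀ x ∈ Set.Icc a₁ a₂, g x = g a₁ + ∫ t in a₁..x, -(ω ^ 2) * (B t : ℂ) * y t) ∧
  g a₁ = -Complex.I * ω * (ν₁ : ℂ) * y a₁ ∧
  (μ₂ : ℂ) * g a₂ = Complex.I * ω * y a₂ ∧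
  ∃ x ∈ Set.Icc a₁ a₂, y x ≠ 0

/-- `ω` is a quasi-eigenvalue of the structure `B`. -/
def IsQuasiEigenvalue (a₁ a₂ : ℝ) (B : ℝ → ℝ) (ν₁ μ₂ : ℝ) (ω : ℂ) : Prop :=
  ω ≠ 0 ∧ ∃ y g : ℝ → ℂ, IsMode a₁ a₂ B ν₁ μ₂ ω y g

open Filter Topology

section IntegralEquation

variable {a b : ℝ}

theorem hasDerivWithinAt_Ici_of_eq_add_integral {E : Type*} [NormedAddCommGroup E]
    [NormedSpace ℝ E] [CompleteSpace E] {f F : ℝ → E} {x : ℝ}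
    (hf : ContinuousOn f (Icc a b)) (hF : ∀ x ∈ Icc a b, F x = F a + ∫ t in a..x, f t)
    (hx : x ∈ Ico a b) : HasDerivWithinAt F (f x) (Ici x) x := by
  have hIcc : Icc a b ∈ 𝓝[≥] x :=
    mem_of_superset (Icc_mem_nhdsGE_of_mem ⟨le_rfl, hx.2⟩) (Icc_subset_Icc_left hx.1)
  have hIcc' : Icc a b ∈ 𝓝[>] x := nhdsWithin_mono _ Ioi_subset_Ici_self hIcc
  have hint : IntervalIntegrable f volume a x :=
    (hf.mono (Icc_subset_Icc_right hx.2.le)).intervalIntegrable_of_Icc hx.1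
  have hderiv := intervalIntegral.integral_hasDerivWithinAt_right (s := Ici x) hint
    ((hf.stronglyMeasurableAtFilter_nhdsWithin measurableSet_Icc x).filter_mono
      (nhdsWithin_le_of_mem hIcc'))
    ((hf x (Ico_subset_Icc_self hx)).mono_of_mem_nhdsWithin hIcc')
  exact (hderiv.const_add (F a)).congr_of_eventuallyEq
    (eventually_of_mem hIcc fun t ht => hF t ht) (hF x (Ico_subset_Icc_self hx))

variable {c : ℂ} {w : ℝ → ℂ}

theorem eq_mul_exp_of_eq_add_integral (hw : ContinuousOn w (Icc a b))
    (hint : ∀ x ∈ Icc a b, w x = w a + ∫ t in a..x, c * w t) :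
    ∀ x ∈ Icc a b, w x = w a * Complex.exp (c * (x - a)) := by
  set φ : ℝ → ℂ := fun x => w x * Complex.exp (-(c * (x - a)))
  have hφ : ∀ x ∈ Icc a b, φ x = φ a := by
    refine constant_of_has_deriv_right_zero (hw.mul (by fun_prop)) fun x hx => ?_
    have hexp : HasDerivAt (fun u : ℝ => Complex.exp (-(c * (u - a))))
        (Complex.exp (-(c * (x - a))) * -c) x := by
      simpa using (((hasDerivAt_id x).sub_const a).ofReal_comp.const_mul c).neg.cexp
    refine ((hasDerivWithinAt_Ici_of_eq_add_integral (continuousOn_const.mul hw) hint hx).mul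
      hexp.hasDerivWithinAt).congr_deriv ?_
    simp only [Pi.mul_apply]
    ring
  intro x hx
  calc w x = φ x * Complex.exp (c * (x - a)) := by
        simp only [φ, mul_assoc, ← Complex.exp_add, neg_add_cancel, Complex.exp_zero, mul_one]
    _ = w a * Complex.exp (c * (x - a)) := by simp [hφ x hx, φ]

theorem eq_zero_of_eq_add_integral (hw : ContinuousOn w (Icc a b))
    (hint : ∀ x ∈ Icc a b, w x = w a + ∫ t in a..x, c * w t) {p : ℝ} (hp : p ∈ Icc a b)
    (hwp : w p = 0) : ∀ x ∈ Icc a b, w x = 0 := by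
  have hexp := eq_mul_exp_of_eq_add_integral hw hint
  have hwa : w a = 0 := by
    simpa [Complex.exp_ne_zero] using (hexp p hp).symm.trans hwp
  intro x hx
  rw [hexp x hx, hwa, zero_mul]

end IntegralEquation

theorem sq_I_mul_mul_ofReal (ω : ℂ) (r : ℝ) :
    (Complex.I * ω * r) ^ 2 = -(ω ^ 2) * ((r ^ 2 : ℝ) : ℂ) := by
  push_cast
  linear_combination (ω * r) ^ 2 * Complex.I_sq

namespace IsMode

variable {a₁ a₂ b r ν₁ μ₂ : ℝ} {ω s : ℂ} {y g : ℝ → ℂ}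

theorem riemannInvariant_eq_add_integral (hm : IsMode a₁ a₂ (fun _ => b) ν₁ μ₂ ω y g)
    (hs : s ^ 2 = -(ω ^ 2) * b) :
    ∀ x ∈ Icc a₁ a₂, g x + s * y x = (g a₁ + s * y a₁) + ∫ t in a₁..x, s * (g t + s * y t) := by
  obtain ⟨hy, hg, -, hiy, hig, -⟩ := hm
  intro x hx
  have hsub : uIcc a₁ x ⊆ Icc a₁ a₂ := by
    rw [uIcc_of_le hx.1]
    exact Icc_subset_Icc_right hx.2
  have hsplit : ∫ t in a₁..x, s * (g t + s * y t) =
      (∫ t in a₁..x, -(ω ^ 2) * (b : ℂ) * y t) + ∫ t in a₁..x, s * g t := by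
    have hiy' : IntervalIntegrable (fun t => -(ω ^ 2) * (b : ℂ) * y t) volume a₁ x :=
      (continuousOn_const.mul (hy.mono hsub)).intervalIntegrable
    have hig' : IntervalIntegrable (fun t => s * g t) volume a₁ x :=
      (continuousOn_const.mul (hg.mono hsub)).intervalIntegrable
    rw [← intervalIntegral.integral_add hiy' hig']
    refine intervalIntegral.integral_congr fun t _ => ?_
    linear_combination y t * hs
  rw [hsplit, hig x hx, hiy x hx]
  simp only [intervalIntegral.integral_const_mul]
  ring

theorem riemannInvariant_eq_zero (hm : IsMode a₁ a₂ (fun _ => b) ν₁ μ₂ ω y g)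
    (hs : s ^ 2 = -(ω ^ 2) * b) {p : ℝ} (hp : p ∈ Icc a₁ a₂) (hp₀ : g p + s * y p = 0) :
    ∀ x ∈ Icc a₁ a₂, g x + s * y x = 0 :=
  eq_zero_of_eq_add_integral (w := fun x => g x + s * y x)
    (hm.2.1.add (continuousOn_const.mul hm.1)) (hm.riemannInvariant_eq_add_integral hs) hp hp₀

theorem eq_zero_of_riemannInvariants (hm : IsMode a₁ a₂ (fun _ => b) ν₁ μ₂ ω y g)
    (hs : s ^ 2 = -(ω ^ 2) * b) (hs₀ : s ≠ 0) {p q : ℝ} (hp : p ∈ Icc a₁ a₂)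
    (hq : q ∈ Icc a₁ a₂) (hp₀ : g p + s * y p = 0) (hq₀ : g q - s * y q = 0) :
    ∀ x ∈ Icc a₁ a₂, y x = 0 := by
  intro x hx
  have hplus := hm.riemannInvariant_eq_zero hs hp hp₀ x hx
  have hminus := hm.riemannInvariant_eq_zero (s := -s) (by rwa [neg_sq]) hq
    (by linear_combination hq₀) x hx
  have h : 2 * s * y x = 0 := by linear_combination hplus - hminus
  simpa [hs₀] using h

theorem eq_zero_of_matched_left (hm : IsMode a₁ a₂ (fun _ => r ^ 2) r μ₂ ω y g)
    (hω : ω ≠ 0) (hr : 0 < r) (hμ₂ : 0 ≤ μ₂) : ∀ x ∈ Icc a₁ a₂, y x = 0 := by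
  intro x hx
  have ha₁ : a₁ ∈ Icc a₁ a₂ := left_mem_Icc.2 (hx.1.trans hx.2)
  have ha₂ : a₂ ∈ Icc a₁ a₂ := right_mem_Icc.2 (hx.1.trans hx.2)
  have ⟨_, _, _, _, _, hbc₁, hbc₂, _⟩ := hm
  have hs := sq_I_mul_mul_ofReal ω r
  have hplus₁ : g a₁ + Complex.I * ω * r * y a₁ = 0 := by
    rw [hbc₁]
    ring
  have hg₂ : g a₂ = -(Complex.I * ω * r) * y a₂ := by
    linear_combination hm.riemannInvariant_eq_zero hs ha₁ hplus₁ a₂ ha₂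
  have hy₂ : y a₂ = 0 := by
    have h : Complex.I * ω * ((1 + μ₂ * r : ℝ) : ℂ) * y a₂ = 0 := by
      push_cast
      linear_combination μ₂ * hg₂ - hbc₂
    have hpos : ((1 + μ₂ * r : ℝ) : ℂ) ≠ 0 := by exact_mod_cast (by positivity : 1 + μ₂ * r ≠ 0)
    exact (mul_eq_zero.1 h).resolve_left (mul_ne_zero (mul_ne_zero Complex.I_ne_zero hω) hpos)
  exact hm.eq_zero_of_riemannInvariants hs (by simp [hω, hr.ne']) ha₁ ha₂ hplus₁
    (by rw [hg₂, hy₂]; ring) x hx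

theorem eq_zero_of_matched_right (hm : IsMode a₁ a₂ (fun _ => r ^ 2) ν₁ μ₂ ω y g)
    (hω : ω ≠ 0) (hr : 0 < r) (hν₁ : 0 ≤ ν₁) (hrμ : r * μ₂ = 1) :
    ∀ x ∈ Icc a₁ a₂, y x = 0 := by
  intro x hx
  have ha₁ : a₁ ∈ Icc a₁ a₂ := left_mem_Icc.2 (hx.1.trans hx.2)
  have ha₂ : a₂ ∈ Icc a₁ a₂ := right_mem_Icc.2 (hx.1.trans hx.2)
  have ⟨_, _, _, _, _, hbc₁, hbc₂, _⟩ := hm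
  have hs := sq_I_mul_mul_ofReal ω r
  have hminus₂ : g a₂ + -(Complex.I * ω * r) * y a₂ = 0 := by
    have hrμ' : (r : ℂ) * μ₂ = 1 := by exact_mod_cast hrμ
    linear_combination r * hbc₂ - g a₂ * hrμ'
  have hg₁ : g a₁ = Complex.I * ω * r * y a₁ := by
    linear_combination hm.riemannInvariant_eq_zero (by rwa [neg_sq]) ha₂ hminus₂ a₁ ha₁
  have hy₁ : y a₁ = 0 := by
    have h : Complex.I * ω * ((ν₁ + r : ℝ) : ℂ) * y a₁ = 0 := by
      push_cast
      linear_combination hbc₁ - hg₁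
    have hpos : ((ν₁ + r : ℝ) : ℂ) ≠ 0 := by exact_mod_cast (by positivity : ν₁ + r ≠ 0)
    exact (mul_eq_zero.1 h).resolve_left (mul_ne_zero (mul_ne_zero Complex.I_ne_zero hω) hpos)
  exact hm.eq_zero_of_riemannInvariants hs (by simp [hω, hr.ne']) ha₁
    ha₂ (by rw [hg₁, hy₁]; ring) (by linear_combination hminus₂) x hx

end IsMode

theorem stmt4_general (a₁ a₂ : ℝ) (ν₁ μ₂ : ℝ) (hν₁ : 0 ≤ ν₁) (hμ₂ : 0 ≤ μ₂)
    (b : ℝ) (hb : 0 < b)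
    (hcase : Real.sqrt b = ν₁ ∨ Real.sqrt b * μ₂ = 1) :
    {ω : ℂ | IsQuasiEigenvalue a₁ a₂ (fun _ => b) ν₁ μ₂ ω} = ∅ := by
  refine eq_empty_of_forall_notMem fun ω ⟨hω, y, g, hm⟩ => ?_
  have ⟨_, _, _, _, _, _, _, x₀, hx₀, hyx₀⟩ := hm
  have hr : 0 < Real.sqrt b := Real.sqrt_pos.2 hb
  rw [show (fun _ : ℝ => b) = fun _ => Real.sqrt b ^ 2 by simp [Real.sq_sqrt hb.le]] at hm
  rcases hcase with rfl | hrμ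
  · exact hyx₀ (hm.eq_zero_of_matched_left hω hr hμ₂ x₀ hx₀)
  · exact hyx₀ (hm.eq_zero_of_matched_right hω hr hν₁ hrμ x₀ hx₀)

/-- If `√b = ν₁` or `√b = ν₂` then the homogeneous structure `B ≡ b` has no
quasi-eigenvalues (`μ₂ = 1/ν₂`, so `√b = ν₂` reads `√b * μ₂ = 1`). -/
theorem stmt4 (a₁ a₂ : ℝ) (h12 : a₁ < a₂) (ν₁ μ₂ : ℝ) (hν₁ : 0 ≤ ν₁) (hμ₂ : 0 ≤ μ₂)
    (hne : ¬(ν₁ = 0 ∧ μ₂ = 0)) (b : ℝ) (hb : 0 < b)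
    (hcase : Real.sqrt b = ν₁ ∨ Real.sqrt b * μ₂ = 1) :
    {ω : ℂ | IsQuasiEigenvalue a₁ a₂ (fun _ => b) ν₁ μ₂ ω} = ∅ :=
  stmt4_general a₁ a₂ ν₁ μ₂ hν₁ hμ₂ b hb hcase
end

section
/- A mode θ associated with a quasi-eigenvalue ω with Re ω > 0 has at most one zero in [a₁,a₂], and any zero lies in the turning interval [x₊, x⁺]. -/
/-!
A zero `x₀` of `θ` kills the flux `Im (conj θ θ')` at `x₀`, so by its sign pattern `x₀ ∈ [xs, xt]`.
On `[xs, xt]` the flux vanishes at both ends, while `(conj θ θ')' = |θ'|² - ω² B |θ|²`;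
integrating by parts gives `Im (ω²) ∫ B |θ|² = 0` over `[xs, xt]`. As
`Im (ω²) = 2 Re ω Im ω < 0` and `B ≥ 0`, `B θ = 0` a.e. there, so `θ'` is constant and `θ` is
affine on `[xs, xt]`. Two distinct zeros then force `θ xs = θ' xs = 0`, and uniqueness for the
linear system `(θ, θ')`, whose coefficient `B` is merely integrable (a Grönwall argument run
backwards from `xs`), gives `θ ≡ 0` on `[a₁, xs]`, contradicting `θ a₁ = 1`.

Since `θ''` is only integrable, the integration by parts is the one for absolutely continuous
functions.
-/

open MeasureTheory Set intervalIntegral Filter Topology ComplexConjugate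

theorem MeasureTheory.IntegrableOn.intervalIntegrable_of_mem_Icc {E : Type*}
    [NormedAddCommGroup E] {f : ℝ → E} {a b x y : ℝ} (hf : IntegrableOn f (Icc a b))
    (hx : x ∈ Icc a b) (hy : y ∈ Icc a b) : IntervalIntegrable f volume x y :=
  (hf.mono_set (uIcc_subset_Icc hx hy)).intervalIntegrable

theorem AbsolutelyContinuousOnInterval.of_dist_le {X Y : Type*} [PseudoMetricSpace X]
    [PseudoMetricSpace Y] {f : ℝ → X} {F : ℝ → Y} {a b : ℝ}
    (hF : AbsolutelyContinuousOnInterval F a b)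
    (h : ∀ x ∈ uIcc a b, ∀ y ∈ uIcc a b, dist (f x) (f y) ≤ dist (F x) (F y)) :
    AbsolutelyContinuousOnInterval f a b := by
  refine squeeze_zero' (Eventually.of_forall fun E => Finset.sum_nonneg fun i _ => dist_nonneg)
    ?_ hF
  filter_upwards [mem_inf_of_right (mem_principal_self _)] with E hE
  exact Finset.sum_le_sum fun i hi => h _ (hE.1 i hi).1 _ (hE.1 i hi).2

section Primitive

variable {E : Type*} [NormedAddCommGroup E] [NormedSpace ℝ E]

def IsPrimitiveOn (u u' : ℝ → E) (s : Set ℝ) : Prop :=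
  ∀ x ∈ s, ∀ y ∈ s, ∫ t in x..y, u' t = u y - u x

theorem IsPrimitiveOn.mono {u u' : ℝ → E} {s t : Set ℝ} (hu : IsPrimitiveOn u u' s)
    (hts : t ⊆ s) : IsPrimitiveOn u u' t :=
  fun _ hx _ hy => hu _ (hts hx) _ (hts hy)

theorem isPrimitiveOn_Icc_of_eq_add_integral {u u' : ℝ → E} {a b : ℝ}
    (hu' : IntegrableOn u' (Icc a b)) (hu : ∀ x ∈ Icc a b, u x = u a + ∫ t in a..x, u' t) :
    IsPrimitiveOn u u' (Icc a b) := by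
  intro x hx y hy
  have ha : a ∈ Icc a b := ⟨le_rfl, hx.1.trans hx.2⟩
  rw [hu x hx, hu y hy, add_sub_add_left_eq_sub, integral_interval_sub_left
    (hu'.intervalIntegrable_of_mem_Icc ha hy) (hu'.intervalIntegrable_of_mem_Icc ha hx)]

theorem IntervalIntegrable.isPrimitiveOn_intervalIntegral {f : ℝ → E} {a b c : ℝ}
    (hf : IntervalIntegrable f volume a b) (hc : c ∈ uIcc a b) :
    IsPrimitiveOn (fun x => ∫ t in c..x, f t) f (uIcc a b) :=
  fun _ hx _ hy => (integral_interval_sub_left (hf.mono_set (uIcc_subset_uIcc hc hy))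
    (hf.mono_set (uIcc_subset_uIcc hc hx))).symm

theorem IsPrimitiveOn.conj {𝕜 : Type*} [RCLike 𝕜] {u u' : ℝ → 𝕜} {s : Set ℝ}
    (hu : IsPrimitiveOn u u' s) : IsPrimitiveOn (fun x => conj (u x)) (fun x => conj (u' x)) s :=
  fun x hx y hy => by rw [intervalIntegral_conj, hu x hx y hy, map_sub]

theorem IsPrimitiveOn.absolutelyContinuousOnInterval {u u' : ℝ → E} {a b : ℝ}
    (hu : IsPrimitiveOn u u' (uIcc a b)) (hu' : IntervalIntegrable u' volume a b) :
    AbsolutelyContinuousOnInterval u a b := by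
  refine (hu'.norm.absolutelyContinuousOnInterval_intervalIntegral left_mem_uIcc).of_dist_le ?_
  intro x hx y hy
  have hnorm := hu'.norm.isPrimitiveOn_intervalIntegral (left_mem_uIcc (b := b)) y hy x hx
  rw [dist_eq_norm, ← hu y hy x hx, Real.dist_eq, ← hnorm]
  exact norm_integral_le_abs_integral_norm

theorem IsPrimitiveOn.ae_hasDerivAt [CompleteSpace E] {u u' : ℝ → E} {a b : ℝ}
    (hu : IsPrimitiveOn u u' (uIcc a b)) (hu' : IntervalIntegrable u' volume a b) :
    ∀ᵐ x, x ∈ uIcc a b → HasDerivAt u (u' x) x := by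
  filter_upwards [hu'.ae_hasDerivAt_integral, Measure.ae_ne volume a, Measure.ae_ne volume b]
    with x hx hxa hxb hxab
  have hnhds : uIcc a b ∈ 𝓝 x := by
    rcases le_total a b with hab | hab
    · rw [uIcc_of_le hab] at hxab ⊢
      exact Icc_mem_nhds (lt_of_le_of_ne hxab.1 hxa.symm) (lt_of_le_of_ne hxab.2 hxb)
    · rw [uIcc_of_ge hab] at hxab ⊢
      exact Icc_mem_nhds (lt_of_le_of_ne hxab.1 hxb.symm) (lt_of_le_of_ne hxab.2 hxa)
  refine ((hx hxab a left_mem_uIcc).const_add (u a)).congr_of_eventuallyEq ?_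
  filter_upwards [hnhds] with y hy
  rw [hu a left_mem_uIcc y hy, add_sub_cancel]

theorem IsPrimitiveOn.integral_mul_add_mul_eq_sub {𝕜 : Type*} [NormedField 𝕜]
    [NormedAlgebra ℝ 𝕜] [CompleteSpace 𝕜] {u u' v v' : ℝ → 𝕜} {a b : ℝ}
    (hu : IsPrimitiveOn u u' (uIcc a b)) (hv : IsPrimitiveOn v v' (uIcc a b))
    (hu' : IntervalIntegrable u' volume a b) (hv' : IntervalIntegrable v' volume a b) :
    ∫ x in a..b, u' x * v x + u x * v' x = u b * v b - u a * v a := by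
  have huac := hu.absolutelyContinuousOnInterval hu'
  have hvac := hv.absolutelyContinuousOnInterval hv'
  have hw : IntervalIntegrable (fun x => u' x * v x + u x * v' x) volume a b :=
    (hu'.mul_continuousOn hvac.continuousOn).add (hv'.continuousOn_mul huac.continuousOn)
  have hW := hw.isPrimitiveOn_intervalIntegral (left_mem_uIcc (b := b))
  have hH : AbsolutelyContinuousOnInterval
      (fun x => u x * v x - ∫ t in a..x, u' t * v t + u t * v' t) a b :=
    (huac.fun_smul hvac).fun_sub (hW.absolutelyContinuousOnInterval hw)
  obtain ⟨C, hC⟩ := hH.const_of_ae_hasDerivAt_zero (by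
    filter_upwards [hu.ae_hasDerivAt hu', hv.ae_hasDerivAt hv', hW.ae_hasDerivAt hw]
      with x hux hvx hWx hx
    have h := ((hux hx).mul (hvx hx)).sub (hWx hx)
    rwa [sub_self] at h)
  have h := (hC b right_mem_uIcc).trans (hC a left_mem_uIcc).symm
  rw [integral_same, sub_zero] at h
  exact eq_sub_of_add_eq' (by rw [← h]; ring)

theorem IsPrimitiveOn.eq_left_of_ae_eq_zero {u u' : ℝ → E} {c d : ℝ}
    (hu : IsPrimitiveOn u u' (Icc c d)) (h0 : u' =ᵐ[volume.restrict (Ioc c d)] 0) :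
    ∀ x ∈ Icc c d, u x = u c := fun x hx => by
  rw [← sub_eq_zero, ← hu c (left_mem_Icc.2 (hx.1.trans hx.2)) x hx, integral_of_le hx.1]
  exact integral_eq_zero_of_ae (ae_restrict_of_ae_restrict_of_subset (Ioc_subset_Ioc_right hx.2) h0)

theorem IsPrimitiveOn.eq_zero_of_eqOn_const_of_two_zeros [CompleteSpace E] {u u' : ℝ → E}
    {c d p q : ℝ} (hu : IsPrimitiveOn u u' (Icc c d)) (hu' : ∀ x ∈ Icc c d, u' x = u' c)
    (hp : p ∈ Icc c d) (hq : q ∈ Icc c d) (hpq : p ≠ q) (hup : u p = 0) (huq : u q = 0) :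
    u c = 0 ∧ u' c = 0 := by
  have hc : c ∈ Icc c d := left_mem_Icc.2 (hp.1.trans hp.2)
  have hconst : ∀ x ∈ Icc c d, ∀ y ∈ Icc c d, u y - u x = (y - x) • u' c := fun x hx y hy => by
    rw [← hu x hx y hy, integral_congr fun t ht => hu' t (uIcc_subset_Icc hx hy ht),
      intervalIntegral.integral_const]
  have hu'c : u' c = 0 := by
    have h := hconst p hp q hq
    rw [hup, huq, sub_zero, eq_comm, smul_eq_zero, sub_eq_zero] at h
    exact h.resolve_left hpq.symm
  have h := hconst c hc p hp
  rw [hup, hu'c, smul_zero, zero_sub, neg_eq_zero] at h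
  exact ⟨h, hu'c⟩

end Primitive

theorem exists_mem_Ioo_intervalIntegral_lt {K : ℝ → ℝ} {a x ε : ℝ}
    (hK : IntegrableOn K (Icc a x)) (hax : a < x) (hε : 0 < ε) :
    ∃ c ∈ Ioo a x, ∫ t in c..x, K t < ε := by
  have hP := (continuousOn_primitive_interval_left (a := a) (b := x) (uIcc_of_le hax.le ▸ hK)
    x right_mem_uIcc).tendsto
  rw [integral_same] at hP
  have hlt := hP.mono_left (nhdsWithin_le_of_mem (uIcc_of_le hax.le ▸ Icc_mem_nhdsLT hax))
  exact ((eventually_mem_set.2 (Ioo_mem_nhdsLT hax)).and (hlt.eventually_lt_const hε)).exists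

section Gronwall

variable {K w : ℝ → ℝ}

theorem integral_mul_eq_zero_of_le_integral_mul_of_integral_lt_one {c d : ℝ} (hcd : c ≤ d)
    (hK : IntegrableOn K (Icc c d)) (hKw : IntegrableOn (fun t => K t * w t) (Icc c d))
    (hK0 : ∀ t ∈ Icc c d, 0 ≤ K t) (hw0 : ∀ t ∈ Icc c d, 0 ≤ w t)
    (hsmall : ∫ t in c..d, K t < 1)
    (hle : ∀ x ∈ Icc c d, w x ≤ ∫ t in x..d, K t * w t) :
    ∫ t in c..d, K t * w t = 0 := by
  set V : ℝ → ℝ := fun x => ∫ t in x..d, K t * w t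
  have hc : c ∈ Icc c d := left_mem_Icc.2 hcd
  have hd : d ∈ Icc c d := right_mem_Icc.2 hcd
  have hV0 : ∀ x ∈ Icc c d, 0 ≤ V x := fun x hx => integral_nonneg hx.2 fun t ht =>
    mul_nonneg (hK0 t ⟨hx.1.trans ht.1, ht.2⟩) (hw0 t ⟨hx.1.trans ht.1, ht.2⟩)
  have hVc : ContinuousOn V (Icc c d) := by
    have := continuousOn_primitive_interval_left (b := d) (a := c) (by rwa [uIcc_of_le hcd])
    rwa [uIcc_of_le hcd] at this
  obtain ⟨p, hp, hpmax⟩ := isCompact_Icc.exists_isMaxOn (nonempty_Icc.2 hcd) hVc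
  have hKp : ∫ t in p..d, K t ≤ ∫ t in c..d, K t := by
    rw [← integral_add_adjacent_intervals (hK.intervalIntegrable_of_mem_Icc hc hp)
      (hK.intervalIntegrable_of_mem_Icc hp hd)]
    exact le_add_of_nonneg_left (integral_nonneg hp.1 fun t ht => hK0 t ⟨ht.1, ht.2.trans hp.2⟩)
  have hVp : V p ≤ (∫ t in c..d, K t) * V p := calc
    V p ≤ ∫ t in p..d, K t * V p := integral_mono_on hp.2
        (hKw.intervalIntegrable_of_mem_Icc hp hd)
        ((hK.intervalIntegrable_of_mem_Icc hp hd).mul_const _) fun t ht =>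
          have ht' : t ∈ Icc c d := ⟨hp.1.trans ht.1, ht.2⟩
          mul_le_mul_of_nonneg_left ((hle t ht').trans (hpmax ht')) (hK0 t ht')
    _ = (∫ t in p..d, K t) * V p := integral_mul_const _ _
    _ ≤ (∫ t in c..d, K t) * V p := mul_le_mul_of_nonneg_right hKp (hV0 p hp)
  have hVp0 : V p = 0 := by nlinarith [hV0 p hp]
  exact le_antisymm (hVp0 ▸ hpmax hc) (hV0 c hc)

theorem eqOn_zero_of_le_integral_mul {a b : ℝ}
    (hK : IntegrableOn K (Icc a b)) (hKw : IntegrableOn (fun t => K t * w t) (Icc a b))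
    (hK0 : ∀ t ∈ Icc a b, 0 ≤ K t) (hw0 : ∀ t ∈ Icc a b, 0 ≤ w t)
    (hle : ∀ x ∈ Icc a b, w x ≤ ∫ t in x..b, K t * w t) : EqOn w 0 (Icc a b) := by
  rcases lt_or_ge b a with hba | hab
  · simp [Icc_eq_empty_of_lt hba]
  set V : ℝ → ℝ := fun x => ∫ t in x..b, K t * w t
  suffices hV : Icc a b ⊆ V ⁻¹' {0} from fun x hx =>
    le_antisymm ((hle x hx).trans_eq (hV hx)) (hw0 x hx)
  have hb : b ∈ Icc a b := right_mem_Icc.2 hab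
  have hVc : ContinuousOn V (Icc a b) := by
    have := continuousOn_primitive_interval_left (b := b) (a := a) (by rwa [uIcc_of_le hab])
    rwa [uIcc_of_le hab] at this
  -- Real induction leftwards from `b` on the zero set of `V`: just left of any of its points
  -- `∫ K < 1`, and there `integral_mul_eq_zero_of_le_integral_mul_of_integral_lt_one` applies.
  refine IsClosed.Icc_subset_of_forall_exists_lt ?_ (by simp [V]) ?_
  · rw [inter_comm]
    exact hVc.preimage_isClosed_of_isClosed isClosed_Icc isClosed_singleton
  rintro x ⟨hVx, hax, hxb⟩ y hyx
  have hxI : x ∈ Icc a b := ⟨hax.le, hxb⟩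
  have hV : ∀ t ∈ Icc a x, V t = ∫ s in t..x, K s * w s := fun t ht => by
    rw [← add_zero (∫ s in t..x, K s * w s), ← mem_singleton_iff.1 hVx]
    exact (integral_add_adjacent_intervals
      (hKw.intervalIntegrable_of_mem_Icc ⟨ht.1, ht.2.trans hxb⟩ hxI)
      (hKw.intervalIntegrable_of_mem_Icc hxI hb)).symm
  have hay : a ≤ max a y := le_max_left _ _
  obtain ⟨c, ⟨hac, hcx⟩, hcK⟩ := exists_mem_Ioo_intervalIntegral_lt
    (hK.mono_set (Icc_subset_Icc hay hxb)) (max_lt hax hyx) one_pos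
  refine ⟨c, ?_, (le_max_right _ _).trans hac.le, hcx⟩
  have hcx' : c ∈ Icc a x := ⟨hay.trans hac.le, hcx.le⟩
  have hsub : Icc c x ⊆ Icc a b := Icc_subset_Icc hcx'.1 hxb
  show V c = 0
  rw [hV c hcx']
  exact integral_mul_eq_zero_of_le_integral_mul_of_integral_lt_one hcx.le
    (hK.mono_set hsub) (hKw.mono_set hsub) (fun t ht => hK0 t (hsub ht))
    (fun t ht => hw0 t (hsub ht)) hcK fun t ht =>
      (hle t (hsub ht)).trans_eq (hV t ⟨hcx'.1.trans ht.1, ht.2⟩)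

end Gronwall

theorem eqOn_zero_of_isPrimitiveOn_of_eq_zero_right {E : Type*} [NormedAddCommGroup E]
    [NormedSpace ℝ E] {u v v' : ℝ → E} {k : ℝ → ℝ} {a b : ℝ} (hk : IntegrableOn k (Icc a b))
    (huc : ContinuousOn u (Icc a b)) (hvc : ContinuousOn v (Icc a b))
    (hu : IsPrimitiveOn u v (Icc a b)) (hv : IsPrimitiveOn v v' (Icc a b))
    (hv'i : IntegrableOn v' (Icc a b)) (hv' : ∀ t ∈ Icc a b, ‖v' t‖ ≤ k t * ‖u t‖)
    (hub : u b = 0) (hvb : v b = 0) : EqOn u 0 (Icc a b) := by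
  have hK : IntegrableOn (fun t => 1 + |k t|) (Icc a b) :=
    (integrableOn_const measure_Icc_lt_top.ne).add hk.abs
  have hKw : IntegrableOn (fun t => (1 + |k t|) * (‖u t‖ + ‖v t‖)) (Icc a b) :=
    hK.mul_continuousOn (huc.norm.add hvc.norm) isCompact_Icc
  have hvn : IntegrableOn (fun t => ‖v t‖) (Icc a b) := hvc.norm.integrableOn_Icc
  have hv'n : IntegrableOn (fun t => ‖v' t‖) (Icc a b) := hv'i.norm
  have hle : ∀ x ∈ Icc a b,
      ‖u x‖ + ‖v x‖ ≤ ∫ t in x..b, (1 + |k t|) * (‖u t‖ + ‖v t‖) := fun x hx => by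
    have hb : b ∈ Icc a b := ⟨hx.1.trans hx.2, le_rfl⟩
    have hvx := hvn.intervalIntegrable_of_mem_Icc hx hb
    have hv'x := hv'n.intervalIntegrable_of_mem_Icc hx hb
    calc ‖u x‖ + ‖v x‖ = ‖∫ t in x..b, v t‖ + ‖∫ t in x..b, v' t‖ := by
          rw [hu x hx b hb, hv x hx b hb, hub, hvb, zero_sub, zero_sub, norm_neg, norm_neg]
      _ ≤ (∫ t in x..b, ‖v t‖) + ∫ t in x..b, ‖v' t‖ :=
          add_le_add (norm_integral_le_integral_norm hx.2) (norm_integral_le_integral_norm hx.2)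
      _ = ∫ t in x..b, (‖v t‖ + ‖v' t‖) := (integral_add hvx hv'x).symm
      _ ≤ ∫ t in x..b, (1 + |k t|) * (‖u t‖ + ‖v t‖) :=
          integral_mono_on hx.2 (hvx.add hv'x) (hKw.intervalIntegrable_of_mem_Icc hx hb)
            fun t ht => by
              have := hv' t ⟨hx.1.trans ht.1, ht.2⟩
              nlinarith [le_abs_self (k t), abs_nonneg (k t), norm_nonneg (u t), norm_nonneg (v t)]
  intro x hx
  have hw : ‖u x‖ + ‖v x‖ = 0 := eqOn_zero_of_le_integral_mul hK hKw
    (fun t _ => by positivity) (fun t _ => by positivity) hle hx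
  exact norm_eq_zero.1 (le_antisymm (by linarith [norm_nonneg (v x)]) (norm_nonneg _))

section Mode

variable {B : ℝ → ℝ} {ω : ℂ} {θ g : ℝ → ℂ} {c d : ℝ}

theorem im_conj_mul_sub_im_conj_mul_eq (hcd : c ≤ d)
    (hθ : IsPrimitiveOn θ g (Icc c d))
    (hg : IsPrimitiveOn g (fun t => -(ω ^ 2) * (B t : ℂ) * θ t) (Icc c d))
    (hgc : ContinuousOn g (Icc c d))
    (hφi : IntegrableOn (fun t => -(ω ^ 2) * (B t : ℂ) * θ t) (Icc c d)) :
    (conj (θ d) * g d).im - (conj (θ c) * g c).im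
      = -(ω ^ 2).im * ∫ t in c..d, B t * Complex.normSq (θ t) := by
  rw [← uIcc_of_le hcd] at hθ hg hgc hφi
  have hgi : IntervalIntegrable (fun t => conj (g t)) volume c d :=
    (Complex.continuous_conj.comp_continuousOn hgc).intervalIntegrable
  have hIBP := hθ.conj.integral_mul_add_mul_eq_sub hg hgi hφi.intervalIntegrable
  have hθc := (hθ.absolutelyContinuousOnInterval hgc.intervalIntegrable).continuousOn
  have hw := (hgi.mul_continuousOn hgc).add (hφi.intervalIntegrable.continuousOn_mul
    (Complex.continuous_conj.comp_continuousOn hθc))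
  rw [← Complex.sub_im, ← hIBP, ← intervalIntegral.integral_const_mul]
  refine (Complex.imCLM.intervalIntegral_comp_comm hw).symm.trans (integral_congr fun t _ => ?_)
  simp only [Function.comp_apply, Complex.imCLM_apply, Complex.add_im, Complex.mul_im,
    Complex.mul_re, Complex.conj_re, Complex.conj_im, Complex.neg_im, Complex.ofReal_re,
    Complex.ofReal_im, Complex.normSq_apply, neg_mul, mul_neg, mul_zero, sub_zero, zero_add,
    neg_add_rev, neg_neg]
  ring

theorem eq_left_of_im_conj_mul_eq_zero (hcd : c ≤ d) (hB : IntegrableOn B (Icc c d))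
    (hB0 : ∀ᵐ t ∂volume.restrict (Icc c d), 0 ≤ B t) (hω : (ω ^ 2).im ≠ 0)
    (hθ : IsPrimitiveOn θ g (Icc c d))
    (hg : IsPrimitiveOn g (fun t => -(ω ^ 2) * (B t : ℂ) * θ t) (Icc c d))
    (hθc : ContinuousOn θ (Icc c d)) (hgc : ContinuousOn g (Icc c d))
    (hc : (conj (θ c) * g c).im = 0) (hd : (conj (θ d) * g d).im = 0) :
    ∀ x ∈ Icc c d, g x = g c := by
  have hωB : IntegrableOn (fun t => -(ω ^ 2) * (B t : ℂ)) (Icc c d) :=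
    (Integrable.ofReal hB).const_mul _
  have hE := im_conj_mul_sub_im_conj_mul_eq hcd hθ hg hgc
    (hωB.mul_continuousOn hθc isCompact_Icc)
  rw [hc, hd, sub_zero, eq_comm, mul_eq_zero, neg_eq_zero] at hE
  have hnn : 0 ≤ᵐ[volume.restrict (Ioc c d)] fun t => B t * Complex.normSq (θ t) := by
    filter_upwards [ae_restrict_of_ae_restrict_of_subset Ioc_subset_Icc_self hB0] with t ht
    exact mul_nonneg ht (Complex.normSq_nonneg _)
  have hi : IntervalIntegrable (fun t => B t * Complex.normSq (θ t)) volume c d :=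
    (hB.mul_continuousOn (Complex.continuous_normSq.comp_continuousOn hθc) isCompact_Icc)
      |>.intervalIntegrable_of_mem_Icc (left_mem_Icc.2 hcd) (right_mem_Icc.2 hcd)
  have h0 := (integral_eq_zero_iff_of_le_of_nonneg_ae hcd hnn hi).1 (hE.resolve_left hω)
  refine hg.eq_left_of_ae_eq_zero ?_
  filter_upwards [h0] with t ht
  rcases mul_eq_zero.1 ht with h | h
  · simp [h]
  · simp [Complex.normSq_eq_zero.1 h]

end Mode

theorem stmt11_general (a₁ a₂ : ℝ) (B : ℝ → ℝ)
    (hBint : MeasureTheory.IntegrableOn B (Set.Icc a₁ a₂))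
    (hB0 : ∀ᵐ x ∂(MeasureTheory.volume.restrict (Set.Icc a₁ a₂)), 0 ≤ B x)
    (ω : ℂ) (hre : 0 < ω.re) (him : ω.im < 0)
    (θ g : ℝ → ℂ)
    (hθC : ContinuousOn θ (Set.Icc a₁ a₂)) (hgC : ContinuousOn g (Set.Icc a₁ a₂))
    (hθ : ∀ x ∈ Set.Icc a₁ a₂, θ x = θ a₁ + ∫ t in a₁..x, g t)
    (hg : ∀ x ∈ Set.Icc a₁ a₂, g x = g a₁ + ∫ t in a₁..x, -(ω ^ 2) * (B t : ℂ) * θ t)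
    (hic0 : θ a₁ = 1)
    (xs xt : ℝ) (hxs : a₁ ≤ xs) (hxst : xs ≤ xt) (hxt : xt ≤ a₂)
    (hneg : ∀ x ∈ Set.Icc a₁ a₂, x < xs → ((starRingEnd ℂ) (θ x) * g x).im < 0)
    (hzero : ∀ x ∈ Set.Icc xs xt, ((starRingEnd ℂ) (θ x) * g x).im = 0)
    (hpos : ∀ x ∈ Set.Icc a₁ a₂, xt < x → 0 < ((starRingEnd ℂ) (θ x) * g x).im) :
    (∀ u ∈ Set.Icc a₁ a₂, ∀ v ∈ Set.Icc a₁ a₂, θ u = 0 → θ v = 0 → u = v) ∧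
    (∀ x₀ ∈ Set.Icc a₁ a₂, θ x₀ = 0 → x₀ ∈ Set.Icc xs xt) := by
  have hωB : IntegrableOn (fun t => -(ω ^ 2) * (B t : ℂ)) (Icc a₁ a₂) :=
    (Integrable.ofReal hBint).const_mul _
  have hφ : IntegrableOn (fun t => -(ω ^ 2) * (B t : ℂ) * θ t) (Icc a₁ a₂) :=
    hωB.mul_continuousOn hθC isCompact_Icc
  have hθP := isPrimitiveOn_Icc_of_eq_add_integral hgC.integrableOn_Icc hθ
  have hgP := isPrimitiveOn_Icc_of_eq_add_integral hφ hg
  have hturn : ∀ x₀ ∈ Icc a₁ a₂, θ x₀ = 0 → x₀ ∈ Icc xs xt := fun x₀ hx₀ h0 => by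
    have h : (conj (θ x₀) * g x₀).im = 0 := by simp [h0]
    exact ⟨not_lt.1 fun h' => (hneg x₀ hx₀ h').ne h, not_lt.1 fun h' => (hpos x₀ hx₀ h').ne' h⟩
  refine ⟨fun p hp q hq hp0 hq0 => by_contra fun hpq => ?_, hturn⟩
  have hsub : Icc xs xt ⊆ Icc a₁ a₂ := Icc_subset_Icc hxs hxt
  have hω : (ω ^ 2).im ≠ 0 := by
    rw [sq, Complex.mul_im]
    nlinarith
  have hgconst := eq_left_of_im_conj_mul_eq_zero hxst (hBint.mono_set hsub)
    (ae_restrict_of_ae_restrict_of_subset hsub hB0) hω (hθP.mono hsub) (hgP.mono hsub)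
    (hθC.mono hsub) (hgC.mono hsub) (hzero xs (left_mem_Icc.2 hxst))
    (hzero xt (right_mem_Icc.2 hxst))
  obtain ⟨hθxs, hgxs⟩ := (hθP.mono hsub).eq_zero_of_eqOn_const_of_two_zeros hgconst
    (hturn p hp hp0) (hturn q hq hq0) hpq hp0 hq0
  have hsub' : Icc a₁ xs ⊆ Icc a₁ a₂ := Icc_subset_Icc_right (hxst.trans hxt)
  have hθa₁ := eqOn_zero_of_isPrimitiveOn_of_eq_zero_right (k := fun t => ‖ω ^ 2‖ * |B t|)
    ((hBint.mono_set hsub').abs.const_mul _) (hθC.mono hsub') (hgC.mono hsub')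
    (hθP.mono hsub') (hgP.mono hsub') (hφ.mono_set hsub')
    (fun t _ => by rw [norm_mul, norm_mul, norm_neg, Complex.norm_real, Real.norm_eq_abs])
    hθxs hgxs (left_mem_Icc.2 hxs)
  simp [hic0] at hθa₁

/-- A mode associated with a quasi-eigenvalue with `Re ω > 0` has at most one zero in
`[a₁,a₂]`, and any zero lies in the turning interval `[x₊,x⁺]`. -/
theorem stmt11 (a₁ a₂ : ℝ) (h12 : a₁ < a₂) (B : ℝ → ℝ)
    (hBint : MeasureTheory.IntegrableOn B (Set.Icc a₁ a₂))
    (hB0 : ∀ᵐ x ∂(MeasureTheory.volume.restrict (Set.Icc a₁ a₂)), 0 ≤ B x)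
    (ν₁ μ₂ : ℝ) (hν₁ : 0 ≤ ν₁) (hμ₂ : 0 ≤ μ₂)
    (ω : ℂ) (hre : 0 < ω.re) (him : ω.im < 0)
    (θ g : ℝ → ℂ)
    (hθC : ContinuousOn θ (Set.Icc a₁ a₂)) (hgC : ContinuousOn g (Set.Icc a₁ a₂))
    (hint : MeasureTheory.IntegrableOn (fun t => (B t : ℂ) * θ t) (Set.Icc a₁ a₂))
    (hθ : ∀ x ∈ Set.Icc a₁ a₂, θ x = θ a₁ + ∫ t in a₁..x, g t)
    (hg : ∀ x ∈ Set.Icc a₁ a₂, g x = g a₁ + ∫ t in a₁..x, -(ω ^ 2) * (B t : ℂ) * θ t)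
    (hic0 : θ a₁ = 1) (hic1 : g a₁ = -Complex.I * ω * (ν₁ : ℂ))
    (hbc2 : (μ₂ : ℂ) * g a₂ = Complex.I * ω * θ a₂)
    (xs xt : ℝ) (hxs : a₁ ≤ xs) (hxst : xs ≤ xt) (hxt : xt ≤ a₂)
    (hneg : ∀ x ∈ Set.Icc a₁ a₂, x < xs → ((starRingEnd ℂ) (θ x) * g x).im < 0)
    (hzero : ∀ x ∈ Set.Icc xs xt, ((starRingEnd ℂ) (θ x) * g x).im = 0)
    (hpos : ∀ x ∈ Set.Icc a₁ a₂, xt < x → 0 < ((starRingEnd ℂ) (θ x) * g x).im) :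
    (∀ u ∈ Set.Icc a₁ a₂, ∀ v ∈ Set.Icc a₁ a₂, θ u = 0 → θ v = 0 → u = v) ∧
    (∀ x₀ ∈ Set.Icc a₁ a₂, θ x₀ = 0 → x₀ ∈ Set.Icc xs xt) :=
  stmt11_general a₁ a₂ B hBint hB0 ω hre him θ g hθC hgC hθ hg hic0 xs xt hxs hxst hxt hneg hzero
    hpos
end
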